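/- There exists an absolute constant C > 0 such that for all z ∈ ℍ and all n ∈ ℕ with n ≥ 2, |∫_{−n}^{n} (s̃ₓ(z) − z) dx| < C log n, where s̃ₓ(z) = x + √((z−x)² − 1). -/

import Mathlib

/-!
Put `w = z - x` and `s = √(w² - 1)`, so that `s̃ₓ(z) - z = s - w` and `(s - w)(s + w) = -1`.
Taking imaginary parts, `Im (s + w) · ‖s - w‖² = Im (s - w)`, and since `Im s ≥ 0 < Im w`
this forces `‖s - w‖ < 1`. Together with `2‖w‖ ≤ ‖s + w‖ + ‖s - w‖` this gives
`‖s̃ₓ(z) - z‖ ≤ 2 / (1 + |x - Re z|)`, whose integral over `[-n, n]` is at most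
`4 log (1 + n) < 8 log n`.
-/

open Complex MeasureTheory Filter

/-- Complex square root with the branch chosen in the closed upper half-plane. -/
noncomputable def csqrtH (w : ℂ) : ℂ :=
  if 0 ≤ (w ^ (1/2 : ℂ)).im then w ^ (1/2 : ℂ) else -(w ^ (1/2 : ℂ))

/-- The slit map at `x`: `s̃ₓ(z) = x + √((z-x)² - 1)`, branch mapping ℍ into ℍ. -/
noncomputable def slitAt (x : ℝ) (z : ℂ) : ℂ := x + csqrtH ((z - x) ^ 2 - 1)

/-- The complex derivative of the slit map at `x`: `(z-x)/√((z-x)² - 1)`. -/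
noncomputable def slitDerivAt (x : ℝ) (z : ℂ) : ℂ := (z - x) / csqrtH ((z - x) ^ 2 - 1)

lemma csqrtH_sq (w : ℂ) : csqrtH w ^ 2 = w := by
  have h : (w ^ (1/2 : ℂ)) ^ 2 = w := by
    simpa only [one_div] using cpow_ofNat_inv_pow w 2
  unfold csqrtH
  split_ifs
  · exact h
  · rw [neg_sq, h]

lemma csqrtH_im_nonneg (w : ℂ) : 0 ≤ (csqrtH w).im := by
  unfold csqrtH
  split_ifs with h
  · exact h
  · simpa using (not_le.mp h).le

lemma norm_sub_lt_one_of_sq_eq {s w : ℂ} (hsq : s ^ 2 = w ^ 2 - 1) (hs : 0 ≤ s.im)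
    (hw : 0 < w.im) : ‖s - w‖ < 1 := by
  have hprod : (s - w) * (s + w) = -1 := by linear_combination hsq
  have hne : s - w ≠ 0 := left_ne_zero_of_mul (by rw [hprod]; norm_num)
  have hsum : s + w = -(s - w)⁻¹ := by
    rw [eq_neg_iff_add_eq_zero, ← mul_right_inj' hne, mul_add, hprod, mul_inv_cancel₀ hne]
    ring
  have him : (s + w).im * normSq (s - w) = (s - w).im := by
    rw [hsum, neg_im, inv_im, neg_div, neg_neg, div_mul_cancel₀ _ (normSq_pos.mpr hne).ne']
  have hnormSq : normSq (s - w) < 1 := by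
    simp only [add_im, sub_im] at him
    nlinarith [normSq_nonneg (s - w)]
  rwa [← sq_lt_one_iff₀ (norm_nonneg _), Complex.sq_norm]

lemma norm_sub_le_of_sq_eq {s w : ℂ} (hsq : s ^ 2 = w ^ 2 - 1) (hs : 0 ≤ s.im)
    (hw : 0 < w.im) : ‖s - w‖ ≤ 2 / (1 + ‖w‖) := by
  have hlt := norm_sub_lt_one_of_sq_eq hsq hs hw
  have hprod : ‖s - w‖ * ‖s + w‖ = 1 := by
    rw [← norm_mul, show (s - w) * (s + w) = -1 by linear_combination hsq, norm_neg, norm_one]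
  have htri : 2 * ‖w‖ ≤ ‖s + w‖ + ‖s - w‖ := by
    calc 2 * ‖w‖ = ‖(s + w) - (s - w)‖ := by
          rw [show (s + w) - (s - w) = 2 * w by ring, norm_mul, Complex.norm_two]
      _ ≤ ‖s + w‖ + ‖s - w‖ := norm_sub_le _ _
  rw [le_div_iff₀ (by positivity)]
  nlinarith [norm_nonneg (s - w), norm_nonneg w]

lemma norm_slitAt_sub_le {z : ℂ} (hz : 0 < z.im) (x : ℝ) :
    ‖slitAt x z - z‖ ≤ 2 * (1 + |x - z.re|)⁻¹ := by
  have hw : 0 < (z - x).im := by simpa using hz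
  have hslit : slitAt x z - z = csqrtH ((z - x) ^ 2 - 1) - (z - x) := by
    rw [slitAt]; ring
  have hre : |x - z.re| ≤ ‖z - x‖ := by
    simpa [abs_sub_comm] using abs_re_le_norm (z - x)
  rw [hslit, ← div_eq_mul_inv]
  refine (norm_sub_le_of_sq_eq (csqrtH_sq _) (csqrtH_im_nonneg _) hw).trans ?_
  gcongr

lemma continuous_inv_one_add_abs_sub (r : ℝ) :
    Continuous fun x : ℝ => (1 + |x - r|)⁻¹ :=
  (continuous_const.add (continuous_id.sub continuous_const).abs).inv₀ fun x =>
    (by positivity : (0:ℝ) < 1 + |x - r|).ne'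

lemma integral_inv_one_add_abs {c : ℝ} (hc : 0 ≤ c) :
    ∫ y in 0..c, (1 + |y|)⁻¹ = Real.log (1 + c) := by
  have hcongr : Set.EqOn (fun y : ℝ => (1 + |y|)⁻¹) (fun y => (y + 1)⁻¹) (Set.uIcc 0 c) := by
    intro y hy
    rw [Set.uIcc_of_le hc] at hy
    simp only [abs_of_nonneg hy.1, add_comm]
  have hzero : (0 : ℝ) ∉ Set.uIcc (0 + 1) (c + 1) := by
    rw [Set.uIcc_of_le (by linarith)]
    exact fun h => by linarith [h.1]
  rw [intervalIntegral.integral_congr hcongr,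
    intervalIntegral.integral_comp_add_right (fun y : ℝ => y⁻¹), integral_inv hzero, zero_add,
    div_one, add_comm]

lemma integral_inv_one_add_abs_sub {a b r : ℝ} (har : a ≤ r) (hrb : r ≤ b) :
    ∫ x in a..b, (1 + |x - r|)⁻¹ = Real.log (1 + (r - a)) + Real.log (1 + (b - r)) := by
  have hcont := continuous_inv_one_add_abs_sub r
  rw [← intervalIntegral.integral_add_adjacent_intervals (hcont.intervalIntegrable a r)
    (hcont.intervalIntegrable r b)]
  congr 1
  · simp_rw [abs_sub_comm _ r]
    rw [intervalIntegral.integral_comp_sub_left (fun y : ℝ => (1 + |y|)⁻¹), sub_self,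
      integral_inv_one_add_abs (sub_nonneg.mpr har)]
  · rw [intervalIntegral.integral_comp_sub_right (fun y : ℝ => (1 + |y|)⁻¹), sub_self,
      integral_inv_one_add_abs (sub_nonneg.mpr hrb)]

/-- Moving `r` to its nearest point of `[-N, N]` only increases the integrand. -/
lemma integral_inv_one_add_abs_sub_le (r : ℝ) {N : ℝ} (hN : 0 ≤ N) :
    ∫ x in -N..N, (1 + |x - r|)⁻¹ ≤ 2 * Real.log (1 + N) := by
  have hNN : -N ≤ N := by linarith
  set p := Set.projIcc (-N) N hNN r
  have hp : -N ≤ (p : ℝ) ∧ (p : ℝ) ≤ N := p.2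
  have hmono : ∀ x ∈ Set.Icc (-N) N, (1 + |x - r|)⁻¹ ≤ (1 + |x - p|)⁻¹ := by
    intro x hx
    have hdist : |x - p| ≤ |x - r| := by
      simpa only [Set.projIcc_of_mem hNN hx] using
        Set.abs_projIcc_sub_projIcc hNN (c := x) (d := r)
    gcongr
  calc ∫ x in -N..N, (1 + |x - r|)⁻¹
      ≤ ∫ x in -N..N, (1 + |x - p|)⁻¹ :=
        intervalIntegral.integral_mono_on hNN
          ((continuous_inv_one_add_abs_sub r).intervalIntegrable _ _)
          ((continuous_inv_one_add_abs_sub p).intervalIntegrable _ _) hmono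
    _ = Real.log ((1 + (p - -N)) * (1 + (N - p))) := by
        rw [integral_inv_one_add_abs_sub hp.1 hp.2, Real.log_mul (by linarith) (by linarith)]
    _ ≤ Real.log ((1 + N) ^ 2) :=
        Real.log_le_log (by nlinarith) (by nlinarith [sq_nonneg (p : ℝ)])
    _ = 2 * Real.log (1 + N) := by rw [Real.log_pow, Nat.cast_ofNat]

/-- `|∫_{-n}^{n} (s̃ₓ(z) - z) dx| < C log n` for all `z ∈ ℍ`, `n ≥ 2`. -/
theorem stmt_4 :
    ∃ C > (0:ℝ), ∀ z : ℂ, 0 < z.im → ∀ n : ℕ, 2 ≤ n →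
      ‖∫ x in (-(n:ℝ))..(n:ℝ), (slitAt x z - z)‖ < C * Real.log n := by
  refine ⟨8, by norm_num, fun z hz n hn => ?_⟩
  have hn' : (2:ℝ) ≤ n := by exact_mod_cast hn
  have hlog : Real.log (1 + n) < Real.log ((n : ℝ) ^ 2) :=
    Real.log_lt_log (by positivity) (by nlinarith)
  rw [Real.log_pow, Nat.cast_ofNat] at hlog
  calc ‖∫ x in (-(n:ℝ))..(n:ℝ), (slitAt x z - z)‖
      ≤ ∫ x in (-(n:ℝ))..(n:ℝ), 2 * (1 + |x - z.re|)⁻¹ :=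
        intervalIntegral.norm_integral_le_of_norm_le (by linarith)
          (ae_of_all _ fun x _ => norm_slitAt_sub_le hz x)
          (((continuous_inv_one_add_abs_sub z.re).const_mul 2).intervalIntegrable _ _)
    _ = 2 * ∫ x in (-(n:ℝ))..(n:ℝ), (1 + |x - z.re|)⁻¹ :=
        intervalIntegral.integral_const_mul _ _
    _ ≤ 2 * (2 * Real.log (1 + n)) := by
        gcongr; exact integral_inv_one_add_abs_sub_le z.re (by linarith)
    _ < 8 * Real.log n := by linarith
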